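/- For all ordinals α, γ < ε₀ and x ∈ ℕ, the Hardy hierarchy satisfies h^{γ+α}(x) = h^γ(h^α(x)). -/

import Mathlib

/-- Ordinal terms below ε₀: a term is a list of exponents,
`cons β γ` denoting ω^β + γ. -/
inductive OT : Type
  | nil : OT
  | cons : OT → OT → OT
deriving DecidableEq

namespace OT

/-- The term 1 = ω^0. -/
def one : OT := cons nil nil

/-- Syntactic concatenation (direct sum) of ordinal terms. -/
def add : OT → OT → OT
  | nil, b => b
  | cons e r, b => cons e (add r b)

/-- A term ω^{β₁}+...+ω^{β_m} is a successor iff m > 0 and β_m = 0. -/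
def isSucc : OT → Bool
  | nil => false
  | cons e nil => e == nil
  | cons _ (cons e r) => isSucc (cons e r)

/-- Remove the last summand ω^0 of a successor term. -/
def pred : OT → OT
  | nil => nil
  | cons _ nil => nil
  | cons e (cons e' r) => cons e (pred (cons e' r))

/-- Limit terms. -/
def isLim (a : OT) : Prop := a ≠ nil ∧ isSucc a = false

/-- ω^β · n as an ordinal term. -/
def rep : ℕ → OT → OT
  | 0, _ => nil
  | n + 1, β => cons β (rep n β)

/-- The standard assignment of fundamental sequences (with ω_x = x+1):
(γ+ω^{β+1})_x = γ+ω^β·(x+1) and (γ+ω^λ)_x = γ+ω^{λ_x}. -/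
def fseq : OT → ℕ → OT
  | nil, _ => nil
  | cons β nil, x =>
      if β = nil then nil
      else if isSucc β then rep (x + 1) (pred β)
      else cons (fseq β x) nil
  | cons β (cons e r), x => cons β (fseq (cons e r) x)

/-- Syntactic ordering of terms (on CNF terms this is the ordinal ordering). -/
def lt : OT → OT → Prop
  | _, nil => False
  | nil, cons _ _ => True
  | cons a r, cons b s => lt a b ∨ (a = b ∧ lt r s)

def le (a b : OT) : Prop := lt a b ∨ a = b

/-- Cantor normal form: exponents weakly decreasing, all in CNF. -/
def isCNF : OT → Prop
  | nil => True
  | cons b nil => isCNF b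
  | cons b (cons e r) => isCNF b ∧ le e b ∧ isCNF (cons e r)

/-- Number of occurrences of the exponent β in a term. -/
def count (β : OT) : OT → ℕ
  | nil => 0
  | cons b r => (if b = β then 1 else 0) + count β r

/-- k-lean: every coefficient (at every level) is ≤ k. -/
def leanOrd (k : ℕ) : OT → Prop
  | nil => True
  | cons b r => count b (cons b r) ≤ k ∧ leanOrd k b ∧ leanOrd k r

end OT

/-- Pointwise-at-x ordering: smallest transitive relation with
α ⊏_x α+1 and λ_x ⊏_x λ. -/
inductive Ptw (x : ℕ) : OT → OT → Prop
  | succ (a : OT) : Ptw x a (OT.add a OT.one)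
  | lim (l : OT) : OT.isLim l → Ptw x (OT.fseq l x) l
  | trans {a b c : OT} : Ptw x a b → Ptw x b c → Ptw x a c


/-!
Induction on the ordinal value of `α`. Appending `γ` on the left commutes with the
predecessor and with fundamental sequences (both act on the last summand only), so the defining
equations of `h^{γ+α}` unfold in lock-step with those of `h^α`, while `h^γ` is carried along
untouched; at `α = 0` both sides are `h^γ(x)`.
-/

namespace OT

theorem add_nil (g : OT) : add g nil = g := by
  induction g with
  | nil => rfl
  | cons e r _ ih => rw [add, ih]

theorem add_ne_nil (g : OT) {a : OT} (ha : a ≠ nil) : add g a ≠ nil := by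
  cases g with
  | nil => exact ha
  | cons e r => exact OT.noConfusion

section ConsOfNeNil

variable (e : OT) {r : OT} (hr : r ≠ nil)
include hr

theorem isSucc_cons_of_ne_nil : isSucc (cons e r) = isSucc r := by
  cases r with
  | nil => exact absurd rfl hr
  | cons => rfl

theorem pred_cons_of_ne_nil : pred (cons e r) = cons e (pred r) := by
  cases r with
  | nil => exact absurd rfl hr
  | cons => rfl

theorem fseq_cons_of_ne_nil (x : ℕ) : fseq (cons e r) x = cons e (fseq r x) := by
  cases r with
  | nil => exact absurd rfl hr
  | cons => rfl

theorem isLim_cons_iff_of_ne_nil : isLim (cons e r) ↔ isLim r := by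
  simp only [isLim, isSucc_cons_of_ne_nil e hr, ne_eq, reduceCtorEq, not_false_eq_true,
    true_and, hr]

end ConsOfNeNil

theorem isLim_cons_nil_iff (e : OT) : isLim (cons e nil) ↔ e ≠ nil := by
  cases e <;> simp [isLim, isSucc]

section AddOfNeNil

variable (g : OT) {a : OT} (ha : a ≠ nil)
include ha

theorem isSucc_add : isSucc (add g a) = isSucc a := by
  induction g with
  | nil => rfl
  | cons e r _ ih => rw [add, isSucc_cons_of_ne_nil e (add_ne_nil r ha), ih]

theorem pred_add : pred (add g a) = add g (pred a) := by
  induction g with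
  | nil => rfl
  | cons e r _ ih => rw [add, pred_cons_of_ne_nil e (add_ne_nil r ha), ih, add]

theorem fseq_add (x : ℕ) : fseq (add g a) x = add g (fseq a x) := by
  induction g with
  | nil => rfl
  | cons e r _ ih => rw [add, fseq_cons_of_ne_nil e (add_ne_nil r ha), ih, add]

theorem isLim_add : isLim (add g a) ↔ isLim a := by
  rw [isLim, isLim, isSucc_add g ha]
  exact and_congr_left fun _ => iff_of_true (add_ne_nil g ha) ha

end AddOfNeNil

open Ordinal

noncomputable def toOrdinal : OT → Ordinal.{0}
  | nil => 0
  | cons e r => ω ^ toOrdinal e + toOrdinal r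

theorem toOrdinal_rep (n : ℕ) (b : OT) : toOrdinal (rep n b) = ω ^ toOrdinal b * n := by
  induction n with
  | zero => simp [rep, toOrdinal]
  | succ n ih =>
    rw [rep, toOrdinal, ih, ← mul_one_add, ← Nat.cast_add_one_comm, Nat.cast_succ]

theorem toOrdinal_pred_add_one {a : OT} (ha : isSucc a = true) :
    toOrdinal (pred a) + 1 = toOrdinal a := by
  induction a with
  | nil => exact absurd ha Bool.false_ne_true
  | cons e r _ ih =>
    cases r with
    | nil =>
      obtain rfl : e = nil := by simpa [isSucc] using ha
      simp [pred, toOrdinal]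
    | cons e' r' =>
      rw [pred_cons_of_ne_nil e OT.noConfusion, toOrdinal, toOrdinal, add_assoc, ih ha]

theorem toOrdinal_pred_lt {a : OT} (ha : isSucc a = true) : toOrdinal (pred a) < toOrdinal a :=
  toOrdinal_pred_add_one ha ▸ lt_add_one _

theorem toOrdinal_fseq_lt {a : OT} (ha : isLim a) (x : ℕ) :
    toOrdinal (fseq a x) < toOrdinal a := by
  induction a with
  | nil => exact absurd rfl ha.1
  | cons e r ihe ihr =>
    cases r with
    | nil =>
      have he : e ≠ nil := (isLim_cons_nil_iff e).1 ha
      by_cases hs : isSucc e = true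
      · -- `ω^β · (x+1) < ω^β · ω = ω^(β+1)`
        simp only [fseq, he, hs, if_false, if_true, toOrdinal_rep, toOrdinal, add_zero]
        rw [← toOrdinal_pred_add_one hs, opow_add, opow_one]
        exact (mul_lt_mul_iff_right₀ (opow_pos _ omega0_pos)).2 (natCast_lt_omega0 _)
      · rw [Bool.not_eq_true] at hs
        simp only [fseq, he, hs, Bool.false_eq_true, if_false, toOrdinal, add_zero]
        exact (opow_lt_opow_iff_right one_lt_omega0).2 (ihe ⟨he, hs⟩)
    | cons e' r' =>
      have hr : cons e' r' ≠ nil := OT.noConfusion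
      rw [fseq_cons_of_ne_nil e hr, toOrdinal, toOrdinal]
      exact add_lt_add_right (ihr ((isLim_cons_iff_of_ne_nil e hr).1 ha)) _

variable {h : ℕ → ℕ} {H : OT → ℕ → ℕ} (hH0 : ∀ x, H nil x = x)
  (hHs : ∀ a x, isSucc a = true → H a x = H (pred a) (h x))
  (hHl : ∀ a x, isLim a → H a x = H (fseq a x) x)
include hH0 hHs hHl

theorem hardy_add (g a : OT) (x : ℕ) : H (add g a) x = H g (H a x) := by
  by_cases hnil : a = nil
  · rw [hnil, add_nil, hH0]
  cases hs : isSucc a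
  · have hlim : isLim a := ⟨hnil, hs⟩
    have := toOrdinal_fseq_lt hlim x
    rw [hHl _ x ((isLim_add g hnil).2 hlim), fseq_add g hnil, hardy_add g (fseq a x) x,
      ← hHl a x hlim]
  · have := toOrdinal_pred_lt hs
    rw [hHs _ x (isSucc_add g hnil ▸ hs), pred_add g hnil, hardy_add g (pred a) (h x),
      ← hHs a x hs]
termination_by toOrdinal a

end OT

/-- Hardy hierarchy: h^{γ+α}(x) = h^γ(h^α(x)), where γ+α is syntactic
concatenation of ordinal terms. -/
theorem stmt13 (h : ℕ → ℕ) (H : OT → ℕ → ℕ)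
    (hH0 : ∀ x, H OT.nil x = x)
    (hHs : ∀ a x, OT.isSucc a = true → H a x = H (OT.pred a) (h x))
    (hHl : ∀ a x, OT.isLim a → H a x = H (OT.fseq a x) x) :
    ∀ (g a : OT) (x : ℕ), H (OT.add g a) x = H g (H a x) :=
  OT.hardy_add hH0 hHs hHl
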